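/- Let D be an (n,α,p)-pseudorandom digraph with p = ω((log n)^8/n), and let S, T be disjoint vertex sets with |S| ≤ |T|/8, |T| ≥ 6(log n)^{2.2}/p, and d^+(s,T) ≥ (1/2 + α/2)p|T| for every s ∈ S. Then there exists a (2,+)-matching from S to T saturating S, i.e., an assignment to each s ∈ S of two distinct out-neighbors in T such that all assigned vertices are distinct across different elements of S. -/

import Mathlib

/-!
By Hall's theorem applied to two copies of every vertex of `S`, it suffices that
`|N⁺(X, T)| ≥ 2|X|` for every `X ⊆ S`. If this fails for some `X`, pad `N⁺(X, T)` inside `T`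
to a set `Y` of size exactly `2|X|` (possible as `|S| ≤ |T|/8`). Every arc from `X` into `T`
lands in `Y`, so `e(X, Y) ≥ (1/2 + α/2) p |T| |X|`. If `3|X| ≤ log² n / p`, then (P2) on `X ∪ Y`
bounds `e(X, Y)` by `3|X| log^{2.1} n`, which is too small because `p|T| ≥ 6 log^{2.2} n`.
Otherwise `|X|, |Y| ≥ log^{1.1} n / p`, and (P3) gives `(1/2 + α/2)|T| ≤ (2 + α)|X| ≤ (2 + α)|T|/8`,
which is absurd.
-/

open Filter

def outDeg {n : ℕ} (D : Fin n → Fin n → Bool) (v : Fin n) (S : Finset (Fin n)) : ℕ :=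
  (S.filter fun w => D v w = true).card

def inDeg {n : ℕ} (D : Fin n → Fin n → Bool) (v : Fin n) (S : Finset (Fin n)) : ℕ :=
  (S.filter fun w => D w v = true).card

def arcsIn {n : ℕ} (D : Fin n → Fin n → Bool) (X : Finset (Fin n)) : ℕ :=
  ((X ×ˢ X).filter fun e => D e.1 e.2 = true).card

def arcsBetween {n : ℕ} (D : Fin n → Fin n → Bool) (X Y : Finset (Fin n)) : ℕ :=
  ((X ×ˢ Y).filter fun e => D e.1 e.2 = true).card

/-- An `(n, α, p)`-pseudorandom digraph, as in Definition 3.1 of the paper. -/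
def IsPseudorandom (n : ℕ) (α p : ℝ) (D : Fin n → Fin n → Bool) : Prop :=
  (∀ v : Fin n, (1/2 + 2*α) * n * p ≤ (outDeg D v Finset.univ : ℝ) ∧
    (1/2 + 2*α) * n * p ≤ (inDeg D v Finset.univ : ℝ)) ∧
  (∀ X : Finset (Fin n), (X.card : ℝ) ≤ (Real.log n)^2 / p →
    (arcsIn D X : ℝ) ≤ (X.card : ℝ) * (Real.log n) ^ (2.1 : ℝ)) ∧
  (∀ X Y : Finset (Fin n), Disjoint X Y →
    (Real.log n) ^ (1.1 : ℝ) / p ≤ (X.card : ℝ) →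
    (Real.log n) ^ (1.1 : ℝ) / p ≤ (Y.card : ℝ) →
    (arcsBetween D X Y : ℝ) ≤ (1 + α/2) * X.card * Y.card * p)

open Finset

lemma exists_injective_prod_fin_of_mul_card_le {ι β : Type*} [DecidableEq β] {k : ℕ}
    (N : ι → Finset β) (hall : ∀ X : Finset ι, k * X.card ≤ (X.biUnion N).card) :
    ∃ y : ι × Fin k → β, Function.Injective y ∧ ∀ a, y a ∈ N a.1 := by
  classical
  refine (all_card_le_biUnion_card_iff_exists_injective _).1 fun A => ?_
  calc A.card ≤ ((A.image Prod.fst) ×ˢ (univ : Finset (Fin k))).card :=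
        card_le_card fun a ha => mem_product.2 ⟨mem_image_of_mem _ ha, mem_univ _⟩
    _ = k * (A.image Prod.fst).card := by rw [card_product, card_univ, Fintype.card_fin, mul_comm]
    _ ≤ ((A.image Prod.fst).biUnion N).card := hall _
    _ = (A.biUnion fun a => N a.1).card := by rw [image_biUnion]

lemma exists_two_matching {V : Type*} [DecidableEq V] (S : Finset V) (N : V → Finset V)
    (hall : ∀ X ⊆ S, 2 * X.card ≤ (X.biUnion N).card) :
    ∃ y₁ y₂ : V → V, (∀ s ∈ S, y₁ s ∈ N s ∧ y₂ s ∈ N s ∧ y₁ s ≠ y₂ s) ∧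
      ∀ s ∈ S, ∀ s' ∈ S, s ≠ s' →
        y₁ s ≠ y₁ s' ∧ y₁ s ≠ y₂ s' ∧ y₂ s ≠ y₁ s' ∧ y₂ s ≠ y₂ s' := by
  have hall' (X : Finset S) : 2 * X.card ≤ (X.biUnion fun s => N s).card := by
    have h := hall (X.image Subtype.val) fun x hx => by obtain ⟨a, -, rfl⟩ := mem_image.1 hx; exact a.2
    rwa [card_image_of_injective _ Subtype.val_injective, image_biUnion] at h
  obtain ⟨y, hy, hyN⟩ := exists_injective_prod_fin_of_mul_card_le _ hall'
  refine ⟨fun s => if h : s ∈ S then y (⟨s, h⟩, 0) else s,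
    fun s => if h : s ∈ S then y (⟨s, h⟩, 1) else s, fun s hs => ?_, fun s hs s' hs' hne => ?_⟩
  · simp only [dif_pos hs]
    exact ⟨hyN (⟨s, hs⟩, 0), hyN (⟨s, hs⟩, 1), fun h => by simpa using hy h⟩
  · simp only [dif_pos hs, dif_pos hs']
    refine ⟨?_, ?_, ?_, ?_⟩ <;> exact fun h => hne (by simpa using congrArg (·.1.1) (hy h))

lemma three_mul_rpow_le_sq {L : ℝ} (hL : 9 ≤ L) : 3 * L ^ (1.1 : ℝ) ≤ L ^ 2 := by
  have h3 : 3 ≤ L ^ (0.9 : ℝ) :=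
    calc (3 : ℝ) = √9 := by rw [show (9 : ℝ) = 3 ^ 2 by norm_num, Real.sqrt_sq (by norm_num)]
      _ ≤ √L := Real.sqrt_le_sqrt hL
      _ = L ^ (1 / 2 : ℝ) := Real.sqrt_eq_rpow L
      _ ≤ L ^ (0.9 : ℝ) := Real.rpow_le_rpow_of_exponent_le (by linarith) (by norm_num)
  calc 3 * L ^ (1.1 : ℝ) ≤ L ^ (0.9 : ℝ) * L ^ (1.1 : ℝ) := by gcongr
    _ = L ^ 2 := by rw [← Real.rpow_add (by linarith)]; norm_num

def outNbhd {n : ℕ} (D : Fin n → Fin n → Bool) (v : Fin n) (S : Finset (Fin n)) :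
    Finset (Fin n) :=
  S.filter fun w => D v w = true

section Digraph

variable {n : ℕ} (D : Fin n → Fin n → Bool)

lemma arcsBetween_eq_sum_outDeg (X Y : Finset (Fin n)) :
    arcsBetween D X Y = ∑ s ∈ X, outDeg D s Y := by
  simp only [arcsBetween, outDeg, card_filter, sum_product]

lemma arcsBetween_le_arcsIn_union (X Y : Finset (Fin n)) :
    arcsBetween D X Y ≤ arcsIn D (X ∪ Y) :=
  card_le_card <| filter_subset_filter _ <|
    product_subset_product subset_union_left subset_union_right

lemma outDeg_le_of_outNbhd_subset {v : Fin n} {T Y : Finset (Fin n)} (h : outNbhd D v T ⊆ Y) :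
    outDeg D v T ≤ outDeg D v Y :=
  card_le_card fun _ hw => mem_filter.2 ⟨h hw, (mem_filter.1 hw).2⟩

lemma card_mul_le_arcsBetween {X Y : Finset (Fin n)} {c : ℝ} (h : ∀ s ∈ X, c ≤ outDeg D s Y) :
    X.card * c ≤ arcsBetween D X Y := by
  rw [arcsBetween_eq_sum_outDeg, Nat.cast_sum, ← nsmul_eq_mul]
  exact card_nsmul_le_sum _ _ _ h

end Digraph

namespace IsPseudorandom

variable {n : ℕ} {α p : ℝ} {D : Fin n → Fin n → Bool}

lemma arcsBetween_le_of_three_mul_card_le (hD : IsPseudorandom n α p D) {X Y : Finset (Fin n)}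
    (hY : Y.card ≤ 2 * X.card) (hsmall : 3 * (X.card : ℝ) ≤ Real.log n ^ 2 / p) :
    (arcsBetween D X Y : ℝ) ≤ 3 * X.card * Real.log n ^ (2.1 : ℝ) := by
  have hXY : ((X ∪ Y).card : ℝ) ≤ 3 * X.card := by
    have : (X ∪ Y).card ≤ 3 * X.card := (card_union_le X Y).trans (by omega)
    exact_mod_cast this
  calc (arcsBetween D X Y : ℝ) ≤ arcsIn D (X ∪ Y) := by
        exact_mod_cast arcsBetween_le_arcsIn_union D X Y
    _ ≤ (X ∪ Y).card * Real.log n ^ (2.1 : ℝ) := hD.2.1 (X ∪ Y) (hXY.trans hsmall)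
    _ ≤ 3 * X.card * Real.log n ^ (2.1 : ℝ) := by gcongr

lemma arcsBetween_le_of_lt_three_mul_card (hD : IsPseudorandom n α p D) (hp : 0 < p)
    (hL : 9 ≤ Real.log n) {X Y : Finset (Fin n)} (hXY : Disjoint X Y) (hY : X.card ≤ Y.card)
    (hlarge : Real.log n ^ 2 / p < 3 * X.card) :
    (arcsBetween D X Y : ℝ) ≤ (1 + α/2) * X.card * Y.card * p := by
  have hX : Real.log n ^ (1.1 : ℝ) / p ≤ X.card := by
    have := three_mul_rpow_le_sq hL
    rw [div_lt_iff₀ hp] at hlarge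
    rw [div_le_iff₀ hp]
    linarith
  exact hD.2.2 X Y hXY hX (hX.trans (by exact_mod_cast hY))

lemma two_mul_card_le_card_biUnion_outNbhd (hD : IsPseudorandom n α p D) (hα : 0 ≤ α)
    (hp : 0 < p) (hL : 9 ≤ Real.log n) {S T X : Finset (Fin n)} (hST : Disjoint S T)
    (hS : (S.card : ℝ) ≤ T.card / 8) (hT : 6 * Real.log n ^ (2.2 : ℝ) / p ≤ T.card)
    (hdeg : ∀ s ∈ S, (1/2 + α/2) * p * T.card ≤ (outDeg D s T : ℝ)) (hXS : X ⊆ S) :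
    2 * X.card ≤ (X.biUnion fun s => outNbhd D s T).card := by
  set L := Real.log n
  by_contra! hlt
  have hX0 : (0 : ℝ) < X.card := by exact_mod_cast (show 0 < X.card by omega)
  have hXS' : (X.card : ℝ) ≤ S.card := by exact_mod_cast card_le_card hXS
  have hXT : 2 * X.card ≤ T.card := by exact_mod_cast (show (2 * X.card : ℝ) ≤ T.card by linarith)
  obtain ⟨Y, hNY, hYT, hY⟩ := exists_subsuperset_card_eq
    (biUnion_subset.2 fun s _ => filter_subset _ T) hlt.le hXT
  have harcs : X.card * ((1/2 + α/2) * p * T.card) ≤ arcsBetween D X Y :=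
    card_mul_le_arcsBetween D fun s hs => (hdeg s (hXS hs)).trans <| by
      exact_mod_cast outDeg_le_of_outNbhd_subset D ((subset_biUnion_of_mem _ hs).trans hNY)
  rcases le_or_gt (3 * X.card : ℝ) (L ^ 2 / p) with hsmall | hlarge
  · have hP2 := hD.arcsBetween_le_of_three_mul_card_le hY.le hsmall
    have hpT : 6 * L ^ (2.2 : ℝ) ≤ p * T.card := by
      rw [div_le_iff₀ hp] at hT; linarith
    have hexp : L ^ (2.1 : ℝ) < L ^ (2.2 : ℝ) :=
      Real.rpow_lt_rpow_of_exponent_lt (by linarith) (by norm_num)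
    have hαpT : 0 ≤ α * (p * T.card) := by positivity
    nlinarith [mul_lt_mul_of_pos_left hexp hX0, mul_le_mul_of_nonneg_left hpT hX0.le,
      mul_nonneg hX0.le hαpT]
  · have hP3 := hD.arcsBetween_le_of_lt_three_mul_card hp hL ((hST.mono_left hXS).mono_right hYT)
      (by omega) hlarge
    have hY' : (Y.card : ℝ) = 2 * X.card := by exact_mod_cast hY
    have hTX : (1/2 + α/2) * T.card ≤ (2 + α) * X.card := by
      refine le_of_mul_le_mul_left ?_ (mul_pos hX0 hp)
      rw [hY'] at hP3
      linarith
    nlinarith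

end IsPseudorandom

theorem stmt_11_general (α : ℝ) (hα : 0 < α) (p : ℕ → ℝ) (hp : ∀ n, 0 < p n ∧ p n < 1)
    (D : (n : ℕ) → Fin n → Fin n → Bool)
    (hD : ∀ n, IsPseudorandom n α (p n) (D n)) :
    ∀ᶠ n in atTop, ∀ S T : Finset (Fin n), Disjoint S T →
      (S.card : ℝ) ≤ (T.card : ℝ) / 8 →
      6 * (Real.log n) ^ (2.2 : ℝ) / p n ≤ (T.card : ℝ) →
      (∀ s ∈ S, (1/2 + α/2) * p n * T.card ≤ (outDeg (D n) s T : ℝ)) →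
      ∃ y₁ y₂ : Fin n → Fin n,
        (∀ s ∈ S, y₁ s ∈ T ∧ y₂ s ∈ T ∧ y₁ s ≠ y₂ s ∧
          D n s (y₁ s) = true ∧ D n s (y₂ s) = true) ∧
        (∀ s ∈ S, ∀ s' ∈ S, s ≠ s' →
          y₁ s ≠ y₁ s' ∧ y₁ s ≠ y₂ s' ∧ y₂ s ≠ y₁ s' ∧ y₂ s ≠ y₂ s') := by
  have hlog : Tendsto (fun n : ℕ => Real.log n) atTop atTop :=
    Real.tendsto_log_atTop.comp tendsto_natCast_atTop_atTop
  filter_upwards [hlog.eventually_ge_atTop 9] with n hL S T hST hS hT hdeg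
  obtain ⟨y₁, y₂, hy, hdisj⟩ := exists_two_matching S (fun s => outNbhd (D n) s T)
    fun X hX => (hD n).two_mul_card_le_card_biUnion_outNbhd hα.le (hp n).1 hL hST hS hT hdeg hX
  refine ⟨y₁, y₂, fun s hs => ?_, hdisj⟩
  obtain ⟨h₁, h₂, hne⟩ := hy s hs
  rw [outNbhd, mem_filter] at h₁ h₂
  exact ⟨h₁.1, h₂.1, hne, h₁.2, h₂.2⟩

/-- Claim 5.5: in a pseudorandom digraph with `p = ω(log^8 n / n)`, if
`|S| ≤ |T|/8`, `|T| ≥ 6 log^{2.2} n / p`, and every vertex of `S` has out-degree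
at least `(1/2 + α/2)p|T|` into `T`, then there is a `(2,+)`-matching from `S`
to `T` saturating `S`. -/
theorem stmt_11 (α : ℝ) (hα : 0 < α) (p : ℕ → ℝ) (hp : ∀ n, 0 < p n ∧ p n < 1)
    (hω : Tendsto (fun n : ℕ => p n * n / (Real.log n) ^ 8) atTop atTop)
    (D : (n : ℕ) → Fin n → Fin n → Bool)
    (hD : ∀ n, IsPseudorandom n α (p n) (D n)) :
    ∀ᶠ n in atTop, ∀ S T : Finset (Fin n), Disjoint S T →
      (S.card : ℝ) ≤ (T.card : ℝ) / 8 →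
      6 * (Real.log n) ^ (2.2 : ℝ) / p n ≤ (T.card : ℝ) →
      (∀ s ∈ S, (1/2 + α/2) * p n * T.card ≤ (outDeg (D n) s T : ℝ)) →
      ∃ y₁ y₂ : Fin n → Fin n,
        (∀ s ∈ S, y₁ s ∈ T ∧ y₂ s ∈ T ∧ y₁ s ≠ y₂ s ∧
          D n s (y₁ s) = true ∧ D n s (y₂ s) = true) ∧
        (∀ s ∈ S, ∀ s' ∈ S, s ≠ s' →
          y₁ s ≠ y₁ s' ∧ y₁ s ≠ y₂ s' ∧ y₂ s ≠ y₁ s' ∧ y₂ s ≠ y₂ s') :=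
  stmt_11_general α hα p hp D hD
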